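/- Let L be a positive integer. Let X be an exponential random variable with mean λ_x > 0 and U an independent gamma random variable with shape L and scale s > 0. Let ζ > 0, N_0 > 0 and δ₁ ≥ 0, and set φ = 1/s + ζ/λ_x. Then P( X ≥ ζ·(U + N_0) and U ≥ δ₁ ) = exp(−ζ·N_0/λ_x) · Γ(L, φ·δ₁) / ( Γ(L) · s^L · φ^L ). -/

import Mathlib

/-!
Condition on `U`. By independence the probability is `∫_{u ≥ δ₁} P(X ≥ ζ (u + N0)) dγ(u)`, and
the exponential tail `exp (-ζ (u + N0) / λ_x)` merges with the gamma density
`s^(-L) u^(L-1) exp (-u / s) / Γ(L)` into `exp (-ζ N0 / λ_x) s^(-L) / Γ(L) · u^(L-1) exp (-φ u)`.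
The substitution `t = φ u` turns the remaining integral over `(δ₁, ∞)` into `Γ(L, φ δ₁) / φ^L`.
-/

open MeasureTheory ProbabilityTheory

/-- Upper incomplete gamma function `Γ(a, b) = ∫_b^∞ t^(a-1) e^(-t) dt`. -/
noncomputable def upperIncGamma (a b : ℝ) : ℝ :=
  ∫ t in Set.Ioi b, t ^ (a - 1) * Real.exp (-t)

open Set Real

lemma upperIncGamma_one (b : ℝ) : upperIncGamma 1 b = exp (-b) := by
  simp only [upperIncGamma, sub_self, rpow_zero, one_mul, integral_exp_neg_Ioi]

lemma integral_rpow_mul_exp_neg_mul_Ioi_eq_upperIncGamma {a φ δ : ℝ} (hφ : 0 < φ) (hδ : 0 ≤ δ) :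
    ∫ u in Ioi δ, u ^ (a - 1) * exp (-(φ * u)) = upperIncGamma a (φ * δ) / φ ^ a := by
  have hsubst := integral_comp_mul_left_Ioi (fun t => t ^ (a - 1) * exp (-t)) δ hφ
  have hscale : ∀ u ∈ Ioi δ, (φ * u) ^ (a - 1) * exp (-(φ * u)) =
      φ ^ (a - 1) * (u ^ (a - 1) * exp (-(φ * u))) := fun u hu => by
    rw [mul_rpow hφ.le (hδ.trans hu.le), mul_assoc]
  rw [setIntegral_congr_fun measurableSet_Ioi hscale, integral_const_mul, smul_eq_mul,
    ← upperIncGamma] at hsubst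
  have hφa : φ ^ a = φ ^ (a - 1) * φ := by
    rw [← rpow_add_one hφ.ne', sub_add_cancel]
  rw [eq_div_iff (rpow_pos_of_pos hφ a).ne', hφa]
  rw [eq_inv_mul_iff_mul_eq₀ hφ.ne'] at hsubst
  linear_combination hsubst

lemma integrableOn_rpow_mul_exp_neg_mul_Ioi {a φ δ : ℝ} (ha : 0 < a) (hφ : 0 < φ) (hδ : 0 ≤ δ) :
    IntegrableOn (fun u => u ^ (a - 1) * exp (-(φ * u))) (Ioi δ) := by
  have h := integrableOn_rpow_mul_exp_neg_mul_rpow (s := a - 1) (by linarith) one_pos hφ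
  simp only [rpow_one, neg_mul] at h
  exact h.mono_set (Ioi_subset_Ioi hδ)

lemma setLIntegral_Ici_exp_neg_mul_gammaMeasure {a t c δ : ℝ} (ha : 0 < a) (ht : 0 < t)
    (hc : 0 ≤ c) (hδ : 0 ≤ δ) :
    ∫⁻ u in Ici δ, ENNReal.ofReal (exp (-(c * u))) ∂gammaMeasure a t =
      ENNReal.ofReal (t ^ a / Gamma a * (upperIncGamma a ((t + c) * δ) / (t + c) ^ a)) := by
  have htc : 0 < t + c := by linarith
  have hΓ : 0 < Gamma a := Gamma_pos_of_pos ha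
  have hdensity : ∀ u ∈ Ici δ, gammaPDF a t u * ENNReal.ofReal (exp (-(c * u))) =
      ENNReal.ofReal (t ^ a / Gamma a * (u ^ (a - 1) * exp (-((t + c) * u)))) := fun u hu => by
    have hu₀ : 0 ≤ u := hδ.trans hu
    rw [gammaPDF_of_nonneg hu₀, ← ENNReal.ofReal_mul (by positivity), mul_assoc,
      mul_assoc, ← exp_add]
    ring_nf
  have hint : IntegrableOn (fun u => t ^ a / Gamma a * (u ^ (a - 1) * exp (-((t + c) * u))))
      (Ici δ) :=
    (integrableOn_Ici_iff_integrableOn_Ioi).2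
      ((integrableOn_rpow_mul_exp_neg_mul_Ioi ha htc hδ).const_mul _)
  have hnonneg : 0 ≤ᵐ[volume.restrict (Ici δ)]
      fun u => t ^ a / Gamma a * (u ^ (a - 1) * exp (-((t + c) * u))) := by
    filter_upwards [ae_restrict_mem measurableSet_Ici] with u hu
    have hu₀ : 0 ≤ u := hδ.trans hu
    positivity
  rw [gammaMeasure, restrict_withDensity measurableSet_Ici,
    lintegral_withDensity_eq_lintegral_mul _
      (show Measurable (gammaPDF a t) from (measurable_gammaPDFReal a t).ennreal_ofReal)
      (by fun_prop)]
  simp only [Pi.mul_apply]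
  rw [setLIntegral_congr_fun measurableSet_Ici hdensity,
    ← ofReal_integral_eq_lintegral_ofReal hint hnonneg, integral_Ici_eq_integral_Ioi,
    integral_const_mul, integral_rpow_mul_exp_neg_mul_Ioi_eq_upperIncGamma htc hδ]

lemma expMeasure_Ici {r x : ℝ} (hr : 0 < r) (hx : 0 ≤ x) :
    expMeasure r (Ici x) = ENNReal.ofReal (exp (-(r * x))) := by
  -- `expMeasure r` is `gammaMeasure 1 r`: the case `a = 1`, `c = 0` of the lemma above.
  have h := setLIntegral_Ici_exp_neg_mul_gammaMeasure one_pos hr le_rfl hx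
  simp only [zero_mul, neg_zero, exp_zero, ENNReal.ofReal_one, setLIntegral_const, one_mul,
    add_zero, rpow_one, Gamma_one, div_one, upperIncGamma_one] at h
  rw [expMeasure, h]
  field_simp

lemma expMeasure_slice_eq_indicator {r ζ N₀ δ : ℝ} (hr : 0 < r) (hζ : 0 ≤ ζ) (hN₀ : 0 ≤ N₀)
    (hδ : 0 ≤ δ) (u : ℝ) :
    expMeasure r ((fun x => (x, u)) ⁻¹' {p : ℝ × ℝ | p.1 ≥ ζ * (p.2 + N₀) ∧ p.2 ≥ δ}) =
      (Ici δ).indicator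
        (fun v => ENNReal.ofReal (exp (-(r * ζ * N₀))) * ENNReal.ofReal (exp (-(r * ζ * v))))
        u := by
  by_cases hu : δ ≤ u
  · have hslice : (fun x => (x, u)) ⁻¹' {p : ℝ × ℝ | p.1 ≥ ζ * (p.2 + N₀) ∧ p.2 ≥ δ} =
        Ici (ζ * (u + N₀)) := by
      ext x
      simp [hu]
    have hu₀ : 0 ≤ u := hδ.trans hu
    rw [hslice, expMeasure_Ici hr (by positivity), indicator_of_mem (mem_Ici.2 hu),
      ← ENNReal.ofReal_mul (exp_pos _).le, ← exp_add]
    congr 2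
    ring
  · have hslice : (fun x => (x, u)) ⁻¹' {p : ℝ × ℝ | p.1 ≥ ζ * (p.2 + N₀) ∧ p.2 ≥ δ} = ∅ := by
      ext x
      simp [hu]
    rw [hslice, indicator_of_notMem (mt mem_Ici.1 hu), measure_empty]

lemma IndepFun.measure_preimage_eq_lintegral {Ω α β : Type*} [MeasurableSpace Ω]
    [MeasurableSpace α] [MeasurableSpace β] {μ : Measure Ω} {X : Ω → α} {Y : Ω → β}
    {ν : Measure α} {ρ : Measure β} [SigmaFinite ν] [SigmaFinite ρ]
    (hXm : Measurable X) (hYm : Measurable Y) (hX : μ.map X = ν) (hY : μ.map Y = ρ)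
    (hind : IndepFun X Y μ) {S : Set (α × β)} (hS : MeasurableSet S) :
    μ ((fun ω => (X ω, Y ω)) ⁻¹' S) = ∫⁻ y, ν ((fun x => (x, y)) ⁻¹' S) ∂ρ := by
  have hσX : SigmaFinite (μ.map X) := hX ▸ inferInstance
  have hσY : SigmaFinite (μ.map Y) := hY ▸ inferInstance
  rw [← Measure.map_apply (hXm.prodMk hYm) hS,
    (indepFun_iff_map_prod_eq_prod_map_map' hXm.aemeasurable hYm.aemeasurable hσX hσY).1 hind,
    hX, hY, Measure.prod_apply_symm hS]

theorem joint_prob_I3_general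
    {Ω : Type*} [MeasureSpace Ω]
    (L : ℕ) (hL : 0 < L)
    (X U : Ω → ℝ) (hXm : Measurable X) (hUm : Measurable U)
    (lx s : ℝ) (hlx : 0 < lx) (hs : 0 < s)
    (hX : Measure.map X ℙ = expMeasure lx⁻¹)
    (hU : Measure.map U ℙ = gammaMeasure L s⁻¹)
    (hind : IndepFun X U ℙ)
    (ζ N0 δ₁ : ℝ) (hζ : 0 < ζ) (hN0 : 0 < N0) (hδ₁ : 0 ≤ δ₁)
    (φ : ℝ) (hφ : φ = 1 / s + ζ / lx) :
    ℙ {ω | X ω ≥ ζ * (U ω + N0) ∧ U ω ≥ δ₁} =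
      ENNReal.ofReal
        (Real.exp (-(ζ * N0 / lx)) * upperIncGamma L (φ * δ₁) /
          (Real.Gamma L * s ^ L * φ ^ L)) := by
  have hL' : (0 : ℝ) < L := Nat.cast_pos.2 hL
  have := isProbabilityMeasure_expMeasure (inv_pos.2 hlx)
  have := isProbabilityMeasure_gammaMeasure hL' (inv_pos.2 hs)
  have hS : MeasurableSet {p : ℝ × ℝ | p.1 ≥ ζ * (p.2 + N0) ∧ p.2 ≥ δ₁} :=
    (measurableSet_le (by fun_prop) measurable_fst).inter
      (measurableSet_le measurable_const measurable_snd)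
  rw [show {ω | X ω ≥ ζ * (U ω + N0) ∧ U ω ≥ δ₁} =
      (fun ω => (X ω, U ω)) ⁻¹' {p : ℝ × ℝ | p.1 ≥ ζ * (p.2 + N0) ∧ p.2 ≥ δ₁} from rfl,
    IndepFun.measure_preimage_eq_lintegral hXm hUm hX hU hind hS,
    lintegral_congr (expMeasure_slice_eq_indicator (inv_pos.2 hlx) hζ.le hN0.le hδ₁),
    lintegral_indicator measurableSet_Ici, lintegral_const_mul _ (by fun_prop),
    setLIntegral_Ici_exp_neg_mul_gammaMeasure hL' (inv_pos.2 hs) (by positivity) hδ₁,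
    ← ENNReal.ofReal_mul (exp_pos _).le, hφ, one_div, rpow_natCast, rpow_natCast, inv_pow]
  congr 1
  field_simp

theorem joint_prob_I3
    {Ω : Type*} [MeasureSpace Ω] [IsProbabilityMeasure (ℙ : Measure Ω)]
    (L : ℕ) (hL : 0 < L)
    (X U : Ω → ℝ) (hXm : Measurable X) (hUm : Measurable U)
    (lx s : ℝ) (hlx : 0 < lx) (hs : 0 < s)
    (hX : Measure.map X ℙ = expMeasure lx⁻¹)
    (hU : Measure.map U ℙ = gammaMeasure L s⁻¹)
    (hind : IndepFun X U ℙ)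
    (ζ N0 δ₁ : ℝ) (hζ : 0 < ζ) (hN0 : 0 < N0) (hδ₁ : 0 ≤ δ₁)
    (φ : ℝ) (hφ : φ = 1 / s + ζ / lx) :
    ℙ {ω | X ω ≥ ζ * (U ω + N0) ∧ U ω ≥ δ₁} =
      ENNReal.ofReal
        (Real.exp (-(ζ * N0 / lx)) * upperIncGamma L (φ * δ₁) /
          (Real.Gamma L * s ^ L * φ ^ L)) :=
  joint_prob_I3_general L hL X U hXm hUm lx s hlx hs hX hU hind ζ N0 δ₁ hζ hN0 hδ₁ φ hφ
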